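/- arXiv:1604.02039 — 12 statements merged into one kernel-verified Lean document; each statement's English description precedes it below -/
import Mathlib

section
/- Let V be a real vector space carrying an almost contact 3-structure (φ_α, ξ_α, η_α), α = 1,2,3, with an HN-metric g, where (ε₁, ε₂, ε₃) = (1, −1, −1). On V × ℝ define J_α(x, a) = (φ_αx − aξ_α, η_α(x)) and G((x, a), (y, b)) = g(x, y) − ab. Then G(J_αX, J_αY) = ε_α G(X, Y) for all X, Y ∈ V × ℝ and each α = 1,2,3; i.e. J₁ acts as a G-isometry and J₂, J₃ act as G-anti-isometries, so (J_α, G) is an almost hypercomplex structure with Hermitian–Norden metric on V × ℝ. -/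
/-- The Levi-Civita symbol on indices Fin 3. -/
def lev (a b c : Fin 3) : ℝ :=
  if (a, b, c) = (0, 1, 2) ∨ (a, b, c) = (1, 2, 0) ∨ (a, b, c) = (2, 0, 1) then 1
  else if (a, b, c) = (2, 1, 0) ∨ (a, b, c) = (1, 0, 2) ∨ (a, b, c) = (0, 2, 1) then -1
  else 0

/-- The signs (ε₁, ε₂, ε₃) = (1, −1, −1). -/
def eps : Fin 3 → ℝ := ![1, -1, -1]

/-- For an almost contact 3-structure with HN-metric g on V, the product metric
G((x,a),(y,b)) = g(x,y) − ab on V × ℝ satisfies G(J_αX, J_αY) = ε_α G(X, Y) for each α,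
where J_α(x, a) = (φ_αx − aξ_α, η_α(x)). -/
theorem stmt_5 {V : Type*} [AddCommGroup V] [Module ℝ V]
    (φ : Fin 3 → V →ₗ[ℝ] V) (ξ : Fin 3 → V) (η : Fin 3 → V →ₗ[ℝ] ℝ)
    (g : LinearMap.BilinForm ℝ V)
    (h1 : ∀ (α β : Fin 3) (x : V),
      φ α (φ β x) = -((if α = β then (1 : ℝ) else 0) • x) + η β x • ξ α
        + ∑ γ : Fin 3, lev α β γ • φ γ x)
    (h2 : ∀ α β : Fin 3, φ α (ξ β) = ∑ γ : Fin 3, lev α β γ • ξ γ)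
    (h3 : ∀ (α β : Fin 3) (x : V), η α (φ β x) = ∑ γ : Fin 3, lev α β γ * η γ x)
    (h4 : ∀ α β : Fin 3, η α (ξ β) = if α = β then 1 else 0)
    (hsym : ∀ x y : V, g x y = g y x)
    (hcomp : ∀ (α : Fin 3) (x y : V),
      g (φ α x) (φ α y) = eps α * g x y + η α x * η α y)
    (J : Fin 3 → V × ℝ → V × ℝ)
    (hJ : ∀ (α : Fin 3) (x : V) (a : ℝ), J α (x, a) = (φ α x - a • ξ α, η α x))
    (G : V × ℝ → V × ℝ → ℝ)
    (hG : ∀ (x y : V) (a b : ℝ), G (x, a) (y, b) = g x y - a * b) :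
    ∀ (α : Fin 3) (X Y : V × ℝ), G (J α X) (J α Y) = eps α * G X Y := by
  have hlev0 : ∀ α γ : Fin 3, lev α α γ = 0 := by
    intro α γ; fin_cases α <;> fin_cases γ <;> simp [lev, Prod.ext_iff]
  have hφξ : ∀ α : Fin 3, φ α (ξ α) = 0 := by
    intro α; rw [h2]; simp [hlev0]
  have hηφ : ∀ (α : Fin 3) (x : V), η α (φ α x) = 0 := by
    intro α x; rw [h3]; simp [hlev0]
  have hgξ : ∀ (α : Fin 3) (x : V), g x (ξ α) = -(eps α * η α x) := by
    intro α x
    have h := hcomp α x (ξ α)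
    rw [hφξ, h4] at h
    simp only [map_zero, if_pos rfl, mul_one] at h
    fin_cases α <;> simp [eps] at h ⊢ <;> linarith
  have hgφξ : ∀ (α : Fin 3) (x : V), g (φ α x) (ξ α) = 0 := by
    intro α x; rw [hgξ, hηφ]; ring
  have hgξξ : ∀ α : Fin 3, g (ξ α) (ξ α) = -eps α := by
    intro α; rw [hgξ, h4]; simp
  rintro α ⟨x, a⟩ ⟨y, b⟩
  rw [hJ, hJ, hG, hG]
  have expand : g (φ α x - a • ξ α) (φ α y - b • ξ α)
      = g (φ α x) (φ α y) - b * g (φ α x) (ξ α) - a * g (ξ α) (φ α y)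
        + a * b * g (ξ α) (ξ α) := by
    simp only [map_sub, map_smul, LinearMap.sub_apply, LinearMap.smul_apply,
      smul_eq_mul]
    ring
  rw [expand, hcomp, hgφξ, hsym (ξ α) (φ α y), hgφξ, hgξξ]
  ring
end

section
/- Let V be a real vector space with an almost contact structure (φ, ξ, η), a symmetric bilinear form g that is 1-compatible with (φ, ξ, η), and a trilinear form F admissible of type 1. Then the Nijenhuis form N and the associated Nijenhuis form N̂ built from F satisfy N̂(x, y, z) = N(z, x, y) + N(z, y, x) for all x, y, z ∈ V. -/
/-- For an almost contact metric structure (ε = 1) with admissible trilinear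
form F, the Nijenhuis form N and the associated Nijenhuis form N̂ satisfy
N̂(x, y, z) = N(z, x, y) + N(z, y, x). -/
theorem stmt_6 {V : Type*} [AddCommGroup V] [Module ℝ V]
    (φ : V →ₗ[ℝ] V) (ξ : V) (η : V →ₗ[ℝ] ℝ)
    (g : LinearMap.BilinForm ℝ V)
    (hφ2 : ∀ x : V, φ (φ x) = -x + η x • ξ)
    (hφξ : φ ξ = 0)
    (hηφ : ∀ x : V, η (φ x) = 0)
    (hηξ : η ξ = 1)
    (hsym : ∀ x y : V, g x y = g y x)
    (hcomp : ∀ x y : V, g (φ x) (φ y) = g x y + η x * η y)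
    (F : V →ₗ[ℝ] V →ₗ[ℝ] V →ₗ[ℝ] ℝ)
    (hFa : ∀ x y z : V, F x y z = -F x z y)
    (hFb : ∀ x y z : V,
      F x y z = -F x (φ y) (φ z) + F x ξ z * η y + F x y ξ * η z)
    (N : V → V → V → ℝ)
    (hN : ∀ x y z : V, N x y z =
      F (φ x) y z + F x y (φ z) + F x (φ y) ξ * η z
        - F (φ y) x z - F y x (φ z) - F y (φ x) ξ * η z)
    (Nhat : V → V → V → ℝ)
    (hNhat : ∀ x y z : V, Nhat x y z =
      F (φ x) y z + F x y (φ z) + F x (φ y) ξ * η z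
        + F (φ y) x z + F y x (φ z) + F y (φ x) ξ * η z) :
    ∀ x y z : V, Nhat x y z = N z x y + N z y x := by
  intro x y z
  have e2 : ∀ a b c : V, F a b (φ c)
      = F a (φ b) c - η c * F a (φ b) ξ + F a ξ (φ c) * η b := by
    intro a b c
    have h := hFb a b (φ c)
    rw [hφ2 c, hηφ] at h
    simp only [map_add, map_neg, map_smul, smul_eq_mul] at h
    linarith [h]
  have exy := e2 x y z
  have eyx := e2 y x z
  have ezx := e2 z x y
  have ezy := e2 z y x
  have h1 := hFa (φ z) x y
  have h2 := hFa (φ x) y z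
  have h3 := hFa (φ y) x z
  have h4 := hFa x (φ y) z
  have h5 := hFa y (φ x) z
  have h6 := hFa z (φ x) y
  have h7 := hFa z (φ y) x
  have m1 : η y * F x ξ (φ z) = -(η y * F x (φ z) ξ) := by rw [hFa x ξ (φ z)]; ring
  have m2 : η x * F y ξ (φ z) = -(η x * F y (φ z) ξ) := by rw [hFa y ξ (φ z)]; ring
  have m3 : η x * F z ξ (φ y) = -(η x * F z (φ y) ξ) := by rw [hFa z ξ (φ y)]; ring
  have m4 : η y * F z ξ (φ x) = -(η y * F z (φ x) ξ) := by rw [hFa z ξ (φ x)]; ring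
  rw [hNhat, hN, hN]
  linarith [exy, eyx, ezx, ezy, h1, h2, h3, h4, h5, h6, h7, m1, m2, m3, m4]
end

section
/- Let V be a real vector space with an almost contact structure (φ, ξ, η), a symmetric bilinear form g that is 1-compatible with (φ, ξ, η), and a trilinear form F admissible of type 1. Then F satisfies the identity F(φx, y, z) + F(φy, x, z) + F(x, y, φz) + F(y, x, φz) = 0 for all x, y, z ∈ V if and only if the associated Nijenhuis form N̂ vanishes identically and L(x, y) := F(x, φy, ξ) + F(y, φx, ξ) vanishes identically (the latter expressing that ξ is a Killing vector field). -/
/-- For an almost contact metric structure (ε = 1) with admissible trilinear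
form F, the identity F(φx,y,z) + F(φy,x,z) + F(x,y,φz) + F(y,x,φz) = 0 holds for all
x, y, z iff the associated Nijenhuis form N̂ vanishes and L(x,y) = F(x,φy,ξ) + F(y,φx,ξ)
vanishes (ξ is Killing). -/
theorem stmt_7 {V : Type*} [AddCommGroup V] [Module ℝ V]
    (φ : V →ₗ[ℝ] V) (ξ : V) (η : V →ₗ[ℝ] ℝ)
    (g : LinearMap.BilinForm ℝ V)
    (hφ2 : ∀ x : V, φ (φ x) = -x + η x • ξ)
    (hφξ : φ ξ = 0)
    (hηφ : ∀ x : V, η (φ x) = 0)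
    (hηξ : η ξ = 1)
    (hsym : ∀ x y : V, g x y = g y x)
    (hcomp : ∀ x y : V, g (φ x) (φ y) = g x y + η x * η y)
    (F : V →ₗ[ℝ] V →ₗ[ℝ] V →ₗ[ℝ] ℝ)
    (hFa : ∀ x y z : V, F x y z = -F x z y)
    (hFb : ∀ x y z : V,
      F x y z = -F x (φ y) (φ z) + F x ξ z * η y + F x y ξ * η z)
    (Nhat : V → V → V → ℝ)
    (hNhat : ∀ x y z : V, Nhat x y z =
      F (φ x) y z + F x y (φ z) + F x (φ y) ξ * η z
        + F (φ y) x z + F y x (φ z) + F y (φ x) ξ * η z)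
    (L : V → V → ℝ)
    (hL : ∀ x y : V, L x y = F x (φ y) ξ + F y (φ x) ξ) :
    (∀ x y z : V,
        F (φ x) y z + F (φ y) x z + F x y (φ z) + F y x (φ z) = 0)
      ↔ ((∀ x y z : V, Nhat x y z = 0) ∧ (∀ x y : V, L x y = 0)) := by
  have hzero3 : ∀ x y : V, F x y (0:V) = 0 := fun x y => map_zero (F x y)
  have hzero1 : ∀ y z : V, F (0:V) y z = 0 := by intro y z; simp
  have hexp1 : ∀ x y z : V, F (φ (φ x)) y z = -F x y z + η x * F ξ y z := by
    intro x y z; rw [hφ2 x]; simp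
  have hexp2 : ∀ x y z : V, F x (φ (φ y)) z = -F x y z + η y * F x ξ z := by
    intro x y z; rw [hφ2 y]; simp
  constructor
  · intro h
    -- S with z = ξ
    have hSξ : ∀ x y : V, F (φ x) y ξ + F (φ y) x ξ = 0 := by
      intro x y
      have := h x y ξ
      rw [hφξ, hzero3, hzero3] at this
      linarith
    -- S with y = ξ
    have hA : ∀ x z : V, F (φ x) ξ z + F x ξ (φ z) + F ξ x (φ z) = 0 := by
      intro x z
      have := h x ξ z
      rw [hφξ, hzero1] at this
      linarith
    have hξξ : ∀ z : V, F ξ ξ (φ z) = 0 := by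
      intro z
      have := hA ξ z
      rw [hφξ, hzero1] at this
      linarith
    -- F x (φ y) ξ = F (φ x) ξ y + F ξ x (φ y)
    have hD : ∀ x y : V, F x (φ y) ξ = F (φ x) ξ y + F ξ x (φ y) := by
      intro x y
      have h1 := hA x y
      have h2 := hFa x (φ y) ξ
      linarith
    -- F ξ x (φ y) + F ξ y (φ x) = 0
    have hE : ∀ x y : V, F ξ x (φ y) + F ξ y (φ x) = 0 := by
      intro x y
      have h1 := hFb ξ (φ x) y
      rw [hexp2] at h1
      have h2 := hFa ξ (φ x) y
      have h3 := hFa ξ (φ x) ξ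
      have h4 := hξξ y
      have h5 := hξξ x
      rw [hηφ x] at h1
      linear_combination h2 - h1 + η x * h4 - η y * h3 + η y * h5
    have hL0 : ∀ x y : V, L x y = 0 := by
      intro x y
      rw [hL]
      have d1 := hD x y
      have d2 := hD y x
      have e := hE x y
      have s := hSξ x y
      have a1 := hFa (φ x) ξ y
      have a2 := hFa (φ y) ξ x
      linarith
    refine ⟨?_, hL0⟩
    intro x y z
    have hl := hL0 x y
    rw [hL] at hl
    have hs := h x y z
    rw [hNhat]
    linear_combination hs + η z * hl
  · rintro ⟨hN, hL0⟩
    intro x y z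
    have hn := hN x y z
    rw [hNhat] at hn
    have hl := hL0 x y
    rw [hL] at hl
    linear_combination hn - η z * hl
end

section
/- Let V be a real vector space with an almost contact structure (φ, ξ, η), a symmetric bilinear form g that is 1-compatible with (φ, ξ, η), and a trilinear form F admissible of type 1. Then the associated Nijenhuis form N̂ vanishes identically if and only if the Nijenhuis form N is totally skew-symmetric (a 3-form), i.e. N(x, y, z) = −N(y, x, z) and N(x, y, z) = −N(x, z, y) for all x, y, z ∈ V. -/
/-- For an almost contact metric structure (ε = 1) with admissible trilinear
form F, the associated Nijenhuis form N̂ vanishes iff the Nijenhuis form N is totally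
skew-symmetric (a 3-form). -/
theorem stmt_8 {V : Type*} [AddCommGroup V] [Module ℝ V]
    (φ : V →ₗ[ℝ] V) (ξ : V) (η : V →ₗ[ℝ] ℝ)
    (g : LinearMap.BilinForm ℝ V)
    (hφ2 : ∀ x : V, φ (φ x) = -x + η x • ξ)
    (hφξ : φ ξ = 0)
    (hηφ : ∀ x : V, η (φ x) = 0)
    (hηξ : η ξ = 1)
    (hsym : ∀ x y : V, g x y = g y x)
    (hcomp : ∀ x y : V, g (φ x) (φ y) = g x y + η x * η y)
    (F : V →ₗ[ℝ] V →ₗ[ℝ] V →ₗ[ℝ] ℝ)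
    (hFa : ∀ x y z : V, F x y z = -F x z y)
    (hFb : ∀ x y z : V,
      F x y z = -F x (φ y) (φ z) + F x ξ z * η y + F x y ξ * η z)
    (N : V → V → V → ℝ)
    (hN : ∀ x y z : V, N x y z =
      F (φ x) y z + F x y (φ z) + F x (φ y) ξ * η z
        - F (φ y) x z - F y x (φ z) - F y (φ x) ξ * η z)
    (Nhat : V → V → V → ℝ)
    (hNhat : ∀ x y z : V, Nhat x y z =
      F (φ x) y z + F x y (φ z) + F x (φ y) ξ * η z
        + F (φ y) x z + F y x (φ z) + F y (φ x) ξ * η z) :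
    (∀ x y z : V, Nhat x y z = 0) ↔
      (∀ x y z : V, N x y z = -N y x z ∧ N x y z = -N x z y) := by
  -- Key identity: A(x,y,z) + A(x,z,y) = 0 where
  -- A(x,y,z) = F(φx,y,z) + F(x,y,φz) + F(x,φy,ξ)η(z)
  have key : ∀ x y z : V,
      (F (φ x) y z + F x y (φ z) + F x (φ y) ξ * η z)
        + (F (φ x) z y + F x z (φ y) + F x (φ z) ξ * η y) = 0 := by
    intro x y z
    have h2 : F x (φ z) y
        = F x z (φ y) - η z * F x ξ (φ y) + F x (φ z) ξ * η y := by
      have h := hFb x (φ z) y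
      rw [hφ2 z] at h
      simp only [map_add, map_neg, map_smul, smul_eq_mul, hηφ,
        LinearMap.add_apply, LinearMap.neg_apply, LinearMap.smul_apply,
        mul_zero, add_zero] at h
      linarith [h]
    linear_combination (hFa (φ x) y z) - h2 + (hFa x (φ z) y)
      + (η z) * (hFa x ξ (φ y))
  -- N is skew in the first two arguments, always.
  have symN : ∀ x y z : V, N x y z = -N y x z := by
    intro x y z
    rw [hN x y z, hN y x z]; ring
  -- Nhat is symmetric in the first two arguments, always.
  have symNhat : ∀ x y z : V, Nhat x y z = Nhat y x z := by
    intro x y z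
    rw [hNhat x y z, hNhat y x z]; ring
  -- Relation: N(x,y,z) + N(x,z,y) + Nhat(x,y,z) + Nhat(x,z,y) = 0.
  have rel : ∀ x y z : V, N x y z + N x z y + Nhat x y z + Nhat x z y = 0 := by
    intro x y z
    linear_combination hN x y z + hN x z y + hNhat x y z + hNhat x z y
      + 2 * key x y z
  constructor
  · intro h0 x y z
    refine ⟨symN x y z, ?_⟩
    have := rel x y z
    have h1 := h0 x y z
    have h2 := h0 x z y
    linarith
  · intro hs x y z
    -- Nhat is skew in last two arguments (from rel and hypothesis).
    have skewhat : ∀ a b c : V, Nhat a b c = -Nhat a c b := by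
      intro a b c
      have := rel a b c
      have h1 := (hs a b c).2
      linarith
    have e1 := symNhat x y z
    have e2 := skewhat y x z
    have e3 := symNhat y z x
    have e4 := skewhat z y x
    have e5 := symNhat z x y
    have e6 := skewhat x z y
    linarith
end

section
/- Let V be a real vector space with an almost contact structure (φ, ξ, η), a symmetric bilinear form g that is (−1)-compatible with (φ, ξ, η) (an almost contact B-metric structure), and a trilinear form F admissible of type −1. If the associated Nijenhuis form N̂ vanishes identically, then L(x, y) := F(x, φy, ξ) + F(y, φx, ξ) vanishes identically, i.e. ξ is a Killing vector field. -/
/-- For an almost contact B-metric structure (ε = −1) with admissible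
trilinear form F of type −1, the vanishing of the associated Nijenhuis form N̂ implies
L(x,y) = F(x,φy,ξ) + F(y,φx,ξ) = 0, i.e. ξ is Killing. -/
theorem stmt_9 {V : Type*} [AddCommGroup V] [Module ℝ V]
    (φ : V →ₗ[ℝ] V) (ξ : V) (η : V →ₗ[ℝ] ℝ)
    (g : LinearMap.BilinForm ℝ V)
    (hφ2 : ∀ x : V, φ (φ x) = -x + η x • ξ)
    (hφξ : φ ξ = 0)
    (hηφ : ∀ x : V, η (φ x) = 0)
    (hηξ : η ξ = 1)
    (hsym : ∀ x y : V, g x y = g y x)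
    (hcomp : ∀ x y : V, g (φ x) (φ y) = -g x y + η x * η y)
    (F : V →ₗ[ℝ] V →ₗ[ℝ] V →ₗ[ℝ] ℝ)
    (hFa : ∀ x y z : V, F x y z = F x z y)
    (hFb : ∀ x y z : V,
      F x y z = F x (φ y) (φ z) + F x ξ z * η y + F x y ξ * η z)
    (Nhat : V → V → V → ℝ)
    (hNhat : ∀ x y z : V, Nhat x y z =
      F (φ x) y z - F x y (φ z) + F x (φ y) ξ * η z
        + F (φ y) x z - F y x (φ z) + F y (φ x) ξ * η z)
    (L : V → V → ℝ)
    (hL : ∀ x y : V, L x y = F x (φ y) ξ + F y (φ x) ξ) :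
    (∀ x y z : V, Nhat x y z = 0) → ∀ x y : V, L x y = 0 := by
  intro hN x y
  -- Step 1: F x ξ ξ = 0 for all x
  have h1 : ∀ a : V, F a ξ ξ = 0 := by
    intro a
    have := hFb a ξ ξ
    simp [hφξ, hηξ] at this
    linarith
  -- Step 2: F ξ (φ a) ξ = 0, from Nhat a ξ ξ = 0
  have h2 : ∀ a : V, F ξ (φ a) ξ = 0 := by
    intro a
    have hn := hN a ξ ξ
    rw [hNhat] at hn
    simp [hφξ, hηξ, h1] at hn
    linarith [hn]
  -- Step 3: F ξ a ξ = 0 for all a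
  have h3 : ∀ a : V, F ξ a ξ = 0 := by
    intro a
    have ha : a = -(φ (φ a)) + η a • ξ := by
      rw [hφ2]; abel
    calc F ξ a ξ = F ξ (-(φ (φ a)) + η a • ξ) ξ := by rw [← ha]
      _ = -(F ξ (φ (φ a)) ξ) + η a * F ξ ξ ξ := by
          simp [map_add, map_neg, map_smul]
      _ = 0 := by rw [h2, h1]; ring
  -- Step 4: F ξ ξ b = 0
  have h4 : ∀ b : V, F ξ ξ b = 0 := fun b => by rw [hFa ξ ξ b, h3]
  -- Step 5: F ξ a b = F ξ (φ a) (φ b)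
  have h5 : ∀ a b : V, F ξ a b = F ξ (φ a) (φ b) := by
    intro a b
    have := hFb ξ a b
    rw [h4, h3] at this
    linarith [this]
  -- Step 6: F ξ a (φ b) = - F ξ b (φ a)
  have h6 : ∀ a b : V, F ξ a (φ b) = -F ξ b (φ a) := by
    intro a b
    have := h5 a (φ b)
    rw [hφ2 b] at this
    have e : F ξ (φ a) (-b + η b • ξ) = -(F ξ (φ a) b) + η b * F ξ (φ a) ξ := by
      simp [map_add, map_neg, map_smul]
    rw [e, h2] at this
    rw [this, hFa ξ b (φ a)]
    ring
  -- Step 7: F (φ a) ξ z = F a ξ (φ z) + F ξ a (φ z), from Nhat a ξ z = 0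
  have h7 : ∀ a z : V, F (φ a) ξ z = F a ξ (φ z) + F ξ a (φ z) := by
    intro a z
    have hn := hN a ξ z
    rw [hNhat] at hn
    simp [hφξ, h2] at hn
    linarith [hn]
  -- Step 8: F (φ a) b ξ = F a (φ b) ξ + F ξ a (φ b)
  have h8 : ∀ a b : V, F (φ a) b ξ = F a (φ b) ξ + F ξ a (φ b) := by
    intro a b
    rw [hFa (φ a) b ξ, h7 a b, hFa a (φ b) ξ]
  -- Final: Nhat x y ξ = 0 gives the result
  have hn := hN x y ξ
  rw [hNhat] at hn
  rw [hφξ, hηξ] at hn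
  simp only [map_zero, LinearMap.zero_apply] at hn
  rw [h8 x y, h8 y x] at hn
  have h6' := h6 x y
  rw [hL]
  linarith [hn, h6']
end

section
/- Let V be a real vector space with an almost contact structure (φ, ξ, η), a symmetric bilinear form g that is (−1)-compatible with (φ, ξ, η), and a trilinear form F admissible of type −1. Define P(x, y, z) := N̂(x, y, z) − L(x, y)η(z) (the (0,3)-form of the tensor {φ, φ}). Then N̂ vanishes identically if and only if both P and L vanish identically. -/
/-- For an almost contact B-metric structure (ε = −1) with admissible
trilinear form F of type −1, setting P(x,y,z) = N̂(x,y,z) − L(x,y)η(z) (the (0,3)-form of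
{φ,φ}), the associated Nijenhuis form N̂ vanishes iff both P and L vanish. -/
theorem stmt_11 {V : Type*} [AddCommGroup V] [Module ℝ V]
    (φ : V →ₗ[ℝ] V) (ξ : V) (η : V →ₗ[ℝ] ℝ)
    (g : LinearMap.BilinForm ℝ V)
    (hφ2 : ∀ x : V, φ (φ x) = -x + η x • ξ)
    (hφξ : φ ξ = 0)
    (hηφ : ∀ x : V, η (φ x) = 0)
    (hηξ : η ξ = 1)
    (hsym : ∀ x y : V, g x y = g y x)
    (hcomp : ∀ x y : V, g (φ x) (φ y) = -g x y + η x * η y)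
    (F : V →ₗ[ℝ] V →ₗ[ℝ] V →ₗ[ℝ] ℝ)
    (hFa : ∀ x y z : V, F x y z = F x z y)
    (hFb : ∀ x y z : V,
      F x y z = F x (φ y) (φ z) + F x ξ z * η y + F x y ξ * η z)
    (Nhat : V → V → V → ℝ)
    (hNhat : ∀ x y z : V, Nhat x y z =
      F (φ x) y z - F x y (φ z) + F x (φ y) ξ * η z
        + F (φ y) x z - F y x (φ z) + F y (φ x) ξ * η z)
    (L : V → V → ℝ)
    (hL : ∀ x y : V, L x y = F x (φ y) ξ + F y (φ x) ξ)
    (P : V → V → V → ℝ)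
    (hP : ∀ x y z : V, P x y z = Nhat x y z - L x y * η z) :
    (∀ x y z : V, Nhat x y z = 0) ↔
      ((∀ x y z : V, P x y z = 0) ∧ (∀ x y : V, L x y = 0)) := by
  constructor
  · intro h
    -- F x ξ ξ = 0
    have hFxξξ : ∀ x : V, F x ξ ξ = 0 := by
      intro x
      have h0 := hFb x ξ ξ
      simp [hφξ, hηξ] at h0
      linarith
    -- F ξ ξ (φ z) = 0
    have hFξξφ : ∀ z : V, F ξ ξ (φ z) = 0 := by
      intro z
      have h0 := h ξ ξ z
      rw [hNhat] at h0
      simp [hφξ] at h0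
      linarith
    -- F ξ ξ w = 0
    have hFξξ : ∀ w : V, F ξ ξ w = 0 := by
      intro w
      have hw : w = η w • ξ - φ (φ w) := by rw [hφ2 w]; abel
      calc F ξ ξ w = F ξ ξ (η w • ξ - φ (φ w)) := by rw [← hw]
        _ = η w * F ξ ξ ξ - F ξ ξ (φ (φ w)) := by
            simp [map_sub, map_smul, smul_eq_mul]
        _ = 0 := by rw [hFξξφ, hFxξξ]; ring
    -- F ξ x ξ = 0
    have hFξxξ : ∀ x : V, F ξ x ξ = 0 := fun x => (hFa ξ x ξ).trans (hFξξ x)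
    -- key identity A
    have hA : ∀ x z : V, F (φ x) ξ z = F x ξ (φ z) + F ξ x (φ z) := by
      intro x z
      have h0 := h x ξ z
      rw [hNhat] at h0
      have h1 : F ξ (φ x) ξ = 0 := (hFa ξ (φ x) ξ).trans (hFξξ (φ x))
      simp [hφξ, h1] at h0
      linarith
    -- antisymmetry S
    have hS : ∀ x y : V, F ξ x (φ y) = - F ξ y (φ x) := by
      intro x y
      have h0 := hFb ξ x (φ y)
      rw [hφ2 y] at h0
      have h1 : F ξ (φ x) ξ = 0 := (hFa ξ (φ x) ξ).trans (hFξξ (φ x))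
      have h2 : F ξ (φ x) (-y + η y • ξ) = - F ξ (φ x) y + η y * F ξ (φ x) ξ := by
        simp [map_add, map_neg, map_smul, smul_eq_mul]
      rw [h2, h1] at h0
      have h3 : F ξ (φ x) y = F ξ y (φ x) := hFa ξ (φ x) y
      rw [hFξξ, hFξxξ, h3] at h0
      linarith
    have hL0 : ∀ x y : V, L x y = 0 := by
      intro x y
      have h0 := h x y ξ
      rw [hNhat] at h0
      simp [hφξ, hηξ] at h0
      have e1 : F (φ x) y ξ = F x (φ y) ξ + F ξ x (φ y) := by
        rw [hFa (φ x) y ξ, hA x y, hFa x ξ (φ y)]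
      have e2 : F (φ y) x ξ = F y (φ x) ξ + F ξ y (φ x) := by
        rw [hFa (φ y) x ξ, hA y x, hFa y ξ (φ x)]
      have e3 := hS x y
      rw [hL]
      linarith
    refine ⟨fun x y z => ?_, hL0⟩
    rw [hP, h x y z, hL0]
    ring
  · rintro ⟨hP0, hL0⟩ x y z
    have h1 := hP0 x y z
    rw [hP, hL0] at h1
    linarith
end

section
/- Let V be a real vector space with an almost contact structure (φ, ξ, η), a symmetric bilinear form g that is 1-compatible with (φ, ξ, η), and a trilinear form F admissible of type 1 which satisfies F(φx, y, z) + F(φy, x, z) + F(x, y, φz) + F(y, x, φz) = 0 for all x, y, z ∈ V. Then the torsion form T(x, y, z) := F(x, y, φz) − F(y, x, φz) − F(φz, x, y) + 2F(x, φy, ξ)η(z) is totally skew-symmetric, i.e. T is a 3-form on V. -/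
/-- For an almost contact metric structure (ε = 1) with admissible trilinear
form F satisfying F(φx,y,z) + F(φy,x,z) + F(x,y,φz) + F(y,x,φz) = 0, the torsion form
T(x,y,z) = F(x,y,φz) − F(y,x,φz) − F(φz,x,y) + 2F(x,φy,ξ)η(z) is totally skew-symmetric. -/
theorem stmt_12 {V : Type*} [AddCommGroup V] [Module ℝ V]
    (φ : V →ₗ[ℝ] V) (ξ : V) (η : V →ₗ[ℝ] ℝ)
    (g : LinearMap.BilinForm ℝ V)
    (hφ2 : ∀ x : V, φ (φ x) = -x + η x • ξ)
    (hφξ : φ ξ = 0)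
    (hηφ : ∀ x : V, η (φ x) = 0)
    (hηξ : η ξ = 1)
    (hsym : ∀ x y : V, g x y = g y x)
    (hcomp : ∀ x y : V, g (φ x) (φ y) = g x y + η x * η y)
    (F : V →ₗ[ℝ] V →ₗ[ℝ] V →ₗ[ℝ] ℝ)
    (hFa : ∀ x y z : V, F x y z = -F x z y)
    (hFb : ∀ x y z : V,
      F x y z = -F x (φ y) (φ z) + F x ξ z * η y + F x y ξ * η z)
    (hclass : ∀ x y z : V,
      F (φ x) y z + F (φ y) x z + F x y (φ z) + F y x (φ z) = 0)
    (T : V → V → V → ℝ)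
    (hT : ∀ x y z : V, T x y z =
      F x y (φ z) - F y x (φ z) - F (φ z) x y + 2 * F x (φ y) ξ * η z) :
    ∀ x y z : V, T x y z = -T y x z ∧ T x y z = -T x z y := by

  -- F(ξ,ξ,·) = 0 on the image of φ
  have hξξφ : ∀ w : V, F ξ ξ (φ w) = 0 := by
    intro w
    have h := hclass ξ ξ w
    rw [hφξ] at h
    simp at h
    linarith
  -- F(ξ,ξ,·) = 0
  have hξξ : ∀ w : V, F ξ ξ w = 0 := by
    intro w
    have h := hξξφ (φ w)
    rw [hφ2 w] at h
    have h0 : F ξ ξ ξ = 0 := by have := hFa ξ ξ ξ; linarith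
    simp [map_add, map_neg, map_smul, smul_eq_mul, h0] at h
    linarith
  -- hclass with z = ξ
  have hstar : ∀ x y : V, F (φ x) y ξ + F (φ y) x ξ = 0 := by
    intro x y
    have h := hclass x y ξ
    rw [hφξ] at h
    simp at h
    linarith
  -- F(φy, φx, ξ) = F(x, y, ξ)
  have hA : ∀ x y : V, F (φ y) (φ x) ξ = F x y ξ := by
    intro x y
    have h := hstar (φ x) y
    rw [hφ2 x] at h
    have h1 : F ξ y ξ = 0 := by
      have := hFa ξ y ξ
      rw [hξξ y] at this
      linarith
    simp [map_add, map_neg, map_smul, smul_eq_mul, h1] at h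
    linarith
  -- F(x, φy, ξ) + F(y, φx, ξ) = 0
  have hB : ∀ x y : V, F x (φ y) ξ + F y (φ x) ξ = 0 := by
    intro x y
    have h := hA x (φ y)
    rw [hφ2 y] at h
    have h1 : F ξ (φ x) ξ = 0 := by
      have := hFa ξ (φ x) ξ
      rw [hξξ (φ x)] at this
      linarith
    simp [map_add, map_neg, map_smul, smul_eq_mul, h1] at h
    linarith
  -- D: F x y (φ z) + F x z (φ y) = -η z * F x (φ y) ξ - η y * F x (φ z) ξ
  have hD : ∀ x y z : V, F x y (φ z) + F x z (φ y)
      = -(η z * F x (φ y) ξ) - η y * F x (φ z) ξ := by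
    intro x y z
    have h := hFb x y (φ z)
    rw [hφ2 z, hηφ z] at h
    have h1 : F x (φ y) z = -F x z (φ y) := hFa x (φ y) z
    have h2 : F x ξ (φ z) = -F x (φ z) ξ := hFa x ξ (φ z)
    simp only [map_add, map_neg, map_smul, smul_eq_mul] at h
    rw [h1, h2] at h
    ring_nf at h ⊢
    linarith
  intro x y z
  constructor
  · rw [hT x y z, hT y x z]
    have hc := hFa (φ z) x y
    have hb := hB x y
    linear_combination -hc + 2 * η z * hb
  · rw [hT x y z, hT x z y]
    have h1 := hclass y x z
    have h2 := hclass z x y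
    have h3 := hFa (φ x) y z
    have h4 := hD x y z
    linear_combination 2 * h4 - h1 - h2 + h3
end

section
/- For the 7-dimensional Lie algebra 𝔩 with bracket [e₁,e₂] = [e₃,e₄] = λe₇, the form g, the Koszul connection ∇, the almost contact HN-metric 3-structure (φ_α, ξ_α, η_α) and the fundamental tensors F_α, the nonzero components on basis vectors listed below all equal λ/2 (with the indicated signs): F₁(e₁,e₁,e₇) = F₁(e₁,e₂,e₆) = −F₁(e₂,e₁,e₆) = F₁(e₂,e₂,e₇) = F₁(e₃,e₃,e₇) = F₁(e₃,e₄,e₆) = −F₁(e₄,e₃,e₆) = F₁(e₄,e₄,e₇) = F₂(e₁,e₂,e₅) = F₂(e₁,e₄,e₇) = −F₂(e₂,e₁,e₅) = F₂(e₂,e₃,e₇) = −F₂(e₃,e₂,e₇) = F₂(e₃,e₄,e₅) = −F₂(e₄,e₁,e₇) = −F₂(e₄,e₃,e₅) = −F₃(e₁,e₃,e₇) = F₃(e₂,e₄,e₇) = F₃(e₃,e₁,e₇) = −F₃(e₄,e₂,e₇) = λ/2. -/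
noncomputable section

/-- The underlying vector space ℝ⁷ of the Lie algebra 𝔩. -/
abbrev L7 : Type := Fin 7 → ℝ

/-- The standard basis e₁, …, e₇ (0-indexed: `e7 0` = e₁, …, `e7 6` = e₇). -/
def e7 (i : Fin 7) : L7 := Pi.single i 1

/-- The pseudo-Euclidean form g with signature (+,+,−,−,−,+,+). -/
def gL (x y : L7) : ℝ :=
  x 0 * y 0 + x 1 * y 1 - x 2 * y 2 - x 3 * y 3 - x 4 * y 4 + x 5 * y 5 + x 6 * y 6

/-- The Lie bracket with [e₁,e₂] = [e₃,e₄] = λ e₇ and all other basis brackets zero. -/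
def brL (lam : ℝ) (x y : L7) : L7 :=
  Pi.single (6 : Fin 7) (lam * (x 0 * y 1 - x 1 * y 0 + x 2 * y 3 - x 3 * y 2))

/-- φ₁: e₁↦e₂, e₂↦−e₁, e₃↦e₄, e₄↦−e₃, e₅↦0, e₆↦e₇, e₇↦−e₆. -/
def ph1 (x : L7) : L7 := ![-x 1, x 0, -x 3, x 2, 0, -x 6, x 5]

/-- φ₂: e₁↦e₃, e₂↦−e₄, e₃↦−e₁, e₄↦e₂, e₅↦−e₇, e₆↦0, e₇↦e₅. -/
def ph2 (x : L7) : L7 := ![-x 2, x 3, x 0, -x 1, x 6, 0, -x 4]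

/-- φ₃: e₁↦e₄, e₂↦e₃, e₃↦−e₂, e₄↦−e₁, e₅↦e₆, e₆↦−e₅, e₇↦0. -/
def ph3 (x : L7) : L7 := ![-x 3, -x 2, x 1, x 0, -x 5, x 4, 0]

/-- the basic nonzero components of the fundamental tensors
F_α(x,y,z) = g(∇ₓ(φ_α y) − φ_α(∇ₓ y), z) are all equal to λ/2 (with indicated signs).
Here `e7 0,…,e7 6` stand for e₁,…,e₇. -/
theorem stmt_14 (lam : ℝ) (hlam : lam ≠ 0)
    (nabla : L7 → L7 → L7)
    (hK : ∀ x y z : L7, gL (nabla x y) z =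
      (1/2) * (gL (brL lam x y) z - gL (brL lam y z) x + gL (brL lam z x) y))
    (F1 F2 F3 : L7 → L7 → L7 → ℝ)
    (hF1 : ∀ x y z : L7, F1 x y z = gL (nabla x (ph1 y) - ph1 (nabla x y)) z)
    (hF2 : ∀ x y z : L7, F2 x y z = gL (nabla x (ph2 y) - ph2 (nabla x y)) z)
    (hF3 : ∀ x y z : L7, F3 x y z = gL (nabla x (ph3 y) - ph3 (nabla x y)) z) :
    F1 (e7 0) (e7 0) (e7 6) = lam/2 ∧
    F1 (e7 0) (e7 1) (e7 5) = lam/2 ∧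
    F1 (e7 1) (e7 0) (e7 5) = -(lam/2) ∧
    F1 (e7 1) (e7 1) (e7 6) = lam/2 ∧
    F1 (e7 2) (e7 2) (e7 6) = lam/2 ∧
    F1 (e7 2) (e7 3) (e7 5) = lam/2 ∧
    F1 (e7 3) (e7 2) (e7 5) = -(lam/2) ∧
    F1 (e7 3) (e7 3) (e7 6) = lam/2 ∧
    F2 (e7 0) (e7 1) (e7 4) = lam/2 ∧
    F2 (e7 0) (e7 3) (e7 6) = lam/2 ∧
    F2 (e7 1) (e7 0) (e7 4) = -(lam/2) ∧
    F2 (e7 1) (e7 2) (e7 6) = lam/2 ∧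
    F2 (e7 2) (e7 1) (e7 6) = -(lam/2) ∧
    F2 (e7 2) (e7 3) (e7 4) = lam/2 ∧
    F2 (e7 3) (e7 0) (e7 6) = -(lam/2) ∧
    F2 (e7 3) (e7 2) (e7 4) = -(lam/2) ∧
    F3 (e7 0) (e7 2) (e7 6) = -(lam/2) ∧
    F3 (e7 1) (e7 3) (e7 6) = lam/2 ∧
    F3 (e7 2) (e7 0) (e7 6) = lam/2 ∧
    F3 (e7 3) (e7 1) (e7 6) = -(lam/2) := by
  have h4 : ∀ x y : L7, nabla x y 4 = 0 := by
    intro x y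
    have h := hK x y (e7 4)
    simp [gL, e7, brL, Pi.single_apply] at h
    linarith
  have h5 : ∀ x y : L7, nabla x y 5 = 0 := by
    intro x y
    have h := hK x y (e7 5)
    simp [gL, e7, brL, Pi.single_apply] at h
    linarith
  have h6 : ∀ x y : L7, nabla x y 6 =
      lam / 2 * (x 0 * y 1 - x 1 * y 0 + x 2 * y 3 - x 3 * y 2) := by
    intro x y
    have h := hK x y (e7 6)
    simp [gL, e7, brL, Pi.single_apply] at h
    linarith
  have p10 : ∀ v : L7, ph1 v 0 = -v 1 := fun v => rfl
  have p11 : ∀ v : L7, ph1 v 1 = v 0 := fun v => rfl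
  have p12 : ∀ v : L7, ph1 v 2 = -v 3 := fun v => rfl
  have p13 : ∀ v : L7, ph1 v 3 = v 2 := fun v => rfl
  have p14 : ∀ v : L7, ph1 v 4 = (0:ℝ) := fun v => rfl
  have p15 : ∀ v : L7, ph1 v 5 = -v 6 := fun v => rfl
  have p16 : ∀ v : L7, ph1 v 6 = v 5 := fun v => rfl
  have p20 : ∀ v : L7, ph2 v 0 = -v 2 := fun v => rfl
  have p21 : ∀ v : L7, ph2 v 1 = v 3 := fun v => rfl
  have p22 : ∀ v : L7, ph2 v 2 = v 0 := fun v => rfl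
  have p23 : ∀ v : L7, ph2 v 3 = -v 1 := fun v => rfl
  have p24 : ∀ v : L7, ph2 v 4 = v 6 := fun v => rfl
  have p25 : ∀ v : L7, ph2 v 5 = (0:ℝ) := fun v => rfl
  have p26 : ∀ v : L7, ph2 v 6 = -v 4 := fun v => rfl
  have p30 : ∀ v : L7, ph3 v 0 = -v 3 := fun v => rfl
  have p31 : ∀ v : L7, ph3 v 1 = -v 2 := fun v => rfl
  have p32 : ∀ v : L7, ph3 v 2 = v 1 := fun v => rfl
  have p33 : ∀ v : L7, ph3 v 3 = v 0 := fun v => rfl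
  have p34 : ∀ v : L7, ph3 v 4 = -v 5 := fun v => rfl
  have p35 : ∀ v : L7, ph3 v 5 = v 4 := fun v => rfl
  have p36 : ∀ v : L7, ph3 v 6 = (0:ℝ) := fun v => rfl
  refine ⟨?_, ?_, ?_, ?_, ?_, ?_, ?_, ?_, ?_, ?_, ?_, ?_, ?_, ?_, ?_, ?_, ?_, ?_, ?_, ?_⟩ <;>
    simp [hF1, hF2, hF3, gL, h4, h5, h6, p10, p11, p12, p13, p14, p15, p16, p20, p21, p22, p23, p24, p25, p26, p30, p31, p32, p33, p34, p35, p36, e7, Pi.single_apply] <;> ring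
end
end

section
/- For the 7-dimensional Lie algebra 𝔩 with bracket [e₁,e₂] = [e₃,e₄] = λe₇, the form g, the Koszul connection ∇ and the almost contact HN-metric 3-structure (φ_α, ξ_α, η_α) with fundamental tensors F_α: the tensor F₁ satisfies the identity F₁(φ₁x, y, z) + F₁(φ₁y, x, z) + F₁(x, y, φ₁z) + F₁(y, x, φ₁z) = 0 for all x, y, z ∈ 𝔩, and ξ₁ is Killing, i.e. g(∇_x ξ₁, y) + g(∇_y ξ₁, x) = 0 for all x, y ∈ 𝔩. -/
noncomputable section

lemma gL_sub (a b z : L7) : gL (a - b) z = gL a z - gL b z := by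
  simp [gL]; ring

lemma gL_ph1 (u z : L7) : gL (ph1 u) z = - gL u (ph1 z) := by
  show (-u 1) * z 0 + u 0 * z 1 - (-u 3) * z 2 - u 2 * z 3 - 0 * z 4
      + (-u 6) * z 5 + u 5 * z 6
    = -(u 0 * (-z 1) + u 1 * z 0 - u 2 * (-z 3) - u 3 * z 2 - u 4 * 0
      + u 5 * (-z 6) + u 6 * z 5)
  ring

lemma gL_brL (lam : ℝ) (a b c : L7) :
    gL (brL lam a b) c = lam * (a 0 * b 1 - a 1 * b 0 + a 2 * b 3 - a 3 * b 2) * c 6 := by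
  simp [gL, brL, Pi.single_apply]

lemma ph1c (u : L7) :
    ph1 u 0 = -u 1 ∧ ph1 u 1 = u 0 ∧ ph1 u 2 = -u 3 ∧ ph1 u 3 = u 2 ∧ ph1 u 6 = u 5 :=
  ⟨rfl, rfl, rfl, rfl, rfl⟩

lemma e7c : e7 (4:Fin 7) 0 = 0 ∧ e7 (4:Fin 7) 1 = 0 ∧ e7 (4:Fin 7) 2 = 0 ∧ e7 (4:Fin 7) 3 = 0 :=
  ⟨rfl, rfl, rfl, rfl⟩



set_option maxHeartbeats 2000000 in
/-- F₁ satisfies the defining identity of the class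
𝒲₂⊕𝒲₄⊕𝒲₉⊕𝒲₁₀⊕𝒲₁₁, and ξ₁ = e₅ is a Killing vector field. -/
theorem stmt_15 (lam : ℝ) (hlam : lam ≠ 0)
    (nabla : L7 → L7 → L7)
    (hK : ∀ x y z : L7, gL (nabla x y) z =
      (1/2) * (gL (brL lam x y) z - gL (brL lam y z) x + gL (brL lam z x) y))
    (F1 : L7 → L7 → L7 → ℝ)
    (hF1 : ∀ x y z : L7, F1 x y z = gL (nabla x (ph1 y) - ph1 (nabla x y)) z) :
    (∀ x y z : L7,
      F1 (ph1 x) y z + F1 (ph1 y) x z + F1 x y (ph1 z) + F1 y x (ph1 z) = 0) ∧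
    (∀ x y : L7, gL (nabla x (e7 4)) y + gL (nabla y (e7 4)) x = 0) := by
  constructor
  · intro x y z
    rw [hF1, hF1, hF1, hF1, gL_sub, gL_sub, gL_sub, gL_sub,
      gL_ph1, gL_ph1, gL_ph1, gL_ph1]
    simp only [hK, gL_brL, (ph1c x).1, (ph1c x).2.1, (ph1c x).2.2.1, (ph1c x).2.2.2.1,
      (ph1c x).2.2.2.2, (ph1c y).1, (ph1c y).2.1, (ph1c y).2.2.1, (ph1c y).2.2.2.1,
      (ph1c y).2.2.2.2, (ph1c z).1, (ph1c z).2.1, (ph1c z).2.2.1, (ph1c z).2.2.2.1,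
      (ph1c z).2.2.2.2, (ph1c (ph1 z)).1, (ph1c (ph1 z)).2.1, (ph1c (ph1 z)).2.2.1,
      (ph1c (ph1 z)).2.2.2.1, (ph1c (ph1 z)).2.2.2.2]
    ring
  · intro x y
    simp only [hK, gL_brL, e7c.1, e7c.2.1, e7c.2.2.1, e7c.2.2.2]
    ring
end
end

section
/- For the 7-dimensional Lie algebra 𝔩 with bracket [e₁,e₂] = [e₃,e₄] = λe₇, the form g, the Koszul connection ∇ and the almost contact HN-metric 3-structure (φ_α, ξ_α, η_α) with fundamental tensors F_α: for α = 2 and α = 3, the cyclic sum F_α(x, y, z) + F_α(y, z, x) + F_α(z, x, y) vanishes for all x, y, z ∈ 𝔩, and ξ_α is Killing, i.e. g(∇_x ξ_α, y) + g(∇_y ξ_α, x) = 0 for all x, y ∈ 𝔩. -/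
noncomputable section

lemma cv0 (a b c d e f g : ℝ) : (![a,b,c,d,e,f,g] : Fin 7 → ℝ) (0 : Fin 7) = a := rfl
lemma cv1 (a b c d e f g : ℝ) : (![a,b,c,d,e,f,g] : Fin 7 → ℝ) (1 : Fin 7) = b := rfl
lemma cv2 (a b c d e f g : ℝ) : (![a,b,c,d,e,f,g] : Fin 7 → ℝ) (2 : Fin 7) = c := rfl
lemma cv3 (a b c d e f g : ℝ) : (![a,b,c,d,e,f,g] : Fin 7 → ℝ) (3 : Fin 7) = d := rfl
lemma cv4 (a b c d e f g : ℝ) : (![a,b,c,d,e,f,g] : Fin 7 → ℝ) (4 : Fin 7) = e := rfl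
lemma cv5 (a b c d e f g : ℝ) : (![a,b,c,d,e,f,g] : Fin 7 → ℝ) (5 : Fin 7) = f := rfl
lemma cv6 (a b c d e f g : ℝ) : (![a,b,c,d,e,f,g] : Fin 7 → ℝ) (6 : Fin 7) = g := rfl

/-- for α = 2 and α = 3, the cyclic sum of F_α vanishes and ξ_α is Killing
(defining conditions of the class ℱ₃⊕ℱ₇); here ξ₂ = e₆ = `e7 5`, ξ₃ = e₇ = `e7 6`. -/
theorem stmt_16 (lam : ℝ) (hlam : lam ≠ 0)
    (nabla : L7 → L7 → L7)
    (hK : ∀ x y z : L7, gL (nabla x y) z =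
      (1/2) * (gL (brL lam x y) z - gL (brL lam y z) x + gL (brL lam z x) y))
    (F2 F3 : L7 → L7 → L7 → ℝ)
    (hF2 : ∀ x y z : L7, F2 x y z = gL (nabla x (ph2 y) - ph2 (nabla x y)) z)
    (hF3 : ∀ x y z : L7, F3 x y z = gL (nabla x (ph3 y) - ph3 (nabla x y)) z) :
    (∀ x y z : L7, F2 x y z + F2 y z x + F2 z x y = 0) ∧
    (∀ x y : L7, gL (nabla x (e7 5)) y + gL (nabla y (e7 5)) x = 0) ∧
    (∀ x y z : L7, F3 x y z + F3 y z x + F3 z x y = 0) ∧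
    (∀ x y : L7, gL (nabla x (e7 6)) y + gL (nabla y (e7 6)) x = 0) := by
  have g2 : ∀ w z : L7, gL (ph2 w) z = gL w (ph2 z) := by
    intro w z; simp [gL, ph2, cv0, cv1, cv2, cv3, cv4, cv5, cv6]; ring
  have g3 : ∀ w z : L7, gL (ph3 w) z = gL w (ph3 z) := by
    intro w z; simp [gL, ph3, cv0, cv1, cv2, cv3, cv4, cv5, cv6]; ring
  have gsub : ∀ u v z : L7, gL (u - v) z = gL u z - gL v z := by
    intro u v z; simp [gL]; ring
  refine ⟨?_, ?_, ?_, ?_⟩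
  · intro x y z
    rw [hF2 x y z, hF2 y z x, hF2 z x y, gsub, gsub, gsub, g2, g2, g2,
      hK, hK, hK, hK, hK, hK]
    simp [gL, brL, ph2, cv0, cv1, cv2, cv3, cv4, cv5, cv6, Pi.single_apply]
    ring
  · intro x y
    rw [hK, hK]
    simp [gL, brL, e7, Pi.single_apply]
    try ring
  · intro x y z
    rw [hF3 x y z, hF3 y z x, hF3 z x y, gsub, gsub, gsub, g3, g3, g3,
      hK, hK, hK, hK, hK, hK]
    simp [gL, brL, ph3, cv0, cv1, cv2, cv3, cv4, cv5, cv6, Pi.single_apply]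
    ring
  · intro x y
    rw [hK, hK]
    simp [gL, brL, e7, Pi.single_apply]
    try ring
end
end

section
/- For the 7-dimensional Lie algebra 𝔩 with bracket [e₁,e₂] = [e₃,e₄] = λe₇, the form g, the Koszul connection ∇ and the almost contact HN-metric 3-structure (φ_α, ξ_α, η_α) with fundamental tensors F_α, define T₁(x,y,z) := F₁(x,y,φ₁z) − F₁(y,x,φ₁z) − F₁(φ₁z,x,y) + 2F₁(x,φ₁y,ξ₁)η₁(z) and T₃(x,y,z) := −(1/2)Σ_{cyc(x,y,z)}[F₃(x,y,φ₃z) − 3η₃(x)F₃(y,φ₃z,ξ₃)] (cyclic sum over (x,y,z)). Then T₁ = T₃, and up to total skew-symmetry their only nonzero components on basis vectors are T₁(e₁,e₂,e₇) = T₁(e₃,e₄,e₇) = −λ. -/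
noncomputable section

private lemma cv0_s17 {α : Type*} (a₀ a₁ a₂ a₃ a₄ a₅ a₆ : α) :
    ![a₀,a₁,a₂,a₃,a₄,a₅,a₆] 0 = a₀ := rfl
private lemma cv1_s17 {α : Type*} (a₀ a₁ a₂ a₃ a₄ a₅ a₆ : α) :
    ![a₀,a₁,a₂,a₃,a₄,a₅,a₆] 1 = a₁ := rfl
private lemma cv2_s17 {α : Type*} (a₀ a₁ a₂ a₃ a₄ a₅ a₆ : α) :
    ![a₀,a₁,a₂,a₃,a₄,a₅,a₆] 2 = a₂ := rfl
private lemma cv3_s17 {α : Type*} (a₀ a₁ a₂ a₃ a₄ a₅ a₆ : α) :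
    ![a₀,a₁,a₂,a₃,a₄,a₅,a₆] 3 = a₃ := rfl
private lemma cv4_s17 {α : Type*} (a₀ a₁ a₂ a₃ a₄ a₅ a₆ : α) :
    ![a₀,a₁,a₂,a₃,a₄,a₅,a₆] 4 = a₄ := rfl
private lemma cv5_s17 {α : Type*} (a₀ a₁ a₂ a₃ a₄ a₅ a₆ : α) :
    ![a₀,a₁,a₂,a₃,a₄,a₅,a₆] 5 = a₅ := rfl
private lemma cv6_s17 {α : Type*} (a₀ a₁ a₂ a₃ a₄ a₅ a₆ : α) :
    ![a₀,a₁,a₂,a₃,a₄,a₅,a₆] 6 = a₆ := rfl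

private def dd (a b : Fin 7) : ℤ := if a = b then 1 else 0

private def cc (i j k : Fin 7) : ℤ :=
  (dd 0 i * dd 1 j - dd 1 i * dd 0 j + dd 2 i * dd 3 j - dd 3 i * dd 2 j) * dd 6 k
  + (dd 0 j * dd 1 k - dd 1 j * dd 0 k + dd 2 j * dd 3 k - dd 3 j * dd 2 k) * dd 6 i
  + (dd 0 k * dd 1 i - dd 1 k * dd 0 i + dd 2 k * dd 3 i - dd 3 k * dd 2 i) * dd 6 j

private lemma ccast (i j k : Fin 7) : ((cc i j k : ℤ) : ℝ) =
    (e7 i 0 * e7 j 1 - e7 i 1 * e7 j 0 + e7 i 2 * e7 j 3 - e7 i 3 * e7 j 2) * e7 k 6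
    + (e7 j 0 * e7 k 1 - e7 j 1 * e7 k 0 + e7 j 2 * e7 k 3 - e7 j 3 * e7 k 2) * e7 i 6
    + (e7 k 0 * e7 i 1 - e7 k 1 * e7 i 0 + e7 k 2 * e7 i 3 - e7 k 3 * e7 i 2) * e7 j 6 := by
  simp only [cc, dd, e7, Pi.single_apply, Int.cast_add, Int.cast_sub, Int.cast_mul,
    apply_ite (fun t : ℤ => (t : ℝ)), Int.cast_one, Int.cast_zero, eq_comm]

private lemma ccdec : ∀ i j k : Fin 7, cc i j k ≠ 0 →
    ({i, j, k} : Finset (Fin 7)) = {0, 1, 6} ∨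
    ({i, j, k} : Finset (Fin 7)) = {2, 3, 6} := by decide

/-- the torsions T₁ (of the natural connection for (φ₁,ξ₁,η₁,g)) and T₃
(of the natural connection for (φ₃,ξ₃,η₃,g)) coincide, and up to total skew-symmetry
their only nonzero components on basis vectors are T₁(e₁,e₂,e₇) = T₁(e₃,e₄,e₇) = −λ.
Here ξ₁ = e₅ = `e7 4`, η₁(x) = x 4, ξ₃ = e₇ = `e7 6`, η₃(x) = x 6. -/
theorem stmt_17 (lam : ℝ) (hlam : lam ≠ 0)
    (nabla : L7 → L7 → L7)
    (hK : ∀ x y z : L7, gL (nabla x y) z =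
      (1/2) * (gL (brL lam x y) z - gL (brL lam y z) x + gL (brL lam z x) y))
    (F1 F3 : L7 → L7 → L7 → ℝ)
    (hF1 : ∀ x y z : L7, F1 x y z = gL (nabla x (ph1 y) - ph1 (nabla x y)) z)
    (hF3 : ∀ x y z : L7, F3 x y z = gL (nabla x (ph3 y) - ph3 (nabla x y)) z)
    (T1 T3 : L7 → L7 → L7 → ℝ)
    (hT1 : ∀ x y z : L7, T1 x y z =
      F1 x y (ph1 z) - F1 y x (ph1 z) - F1 (ph1 z) x y + 2 * F1 x (ph1 y) (e7 4) * z 4)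
    (hT3 : ∀ x y z : L7, T3 x y z = -(1/2) *
      ((F3 x y (ph3 z) - 3 * x 6 * F3 y (ph3 z) (e7 6))
        + (F3 y z (ph3 x) - 3 * y 6 * F3 z (ph3 x) (e7 6))
        + (F3 z x (ph3 y) - 3 * z 6 * F3 x (ph3 y) (e7 6)))) :
    T1 = T3 ∧
    T1 (e7 0) (e7 1) (e7 6) = -lam ∧
    T1 (e7 2) (e7 3) (e7 6) = -lam ∧
    (∀ i j k : Fin 7, T1 (e7 i) (e7 j) (e7 k) ≠ 0 →
      ({i, j, k} : Finset (Fin 7)) = {0, 1, 6} ∨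
      ({i, j, k} : Finset (Fin 7)) = {2, 3, 6}) := by

  have hnab : ∀ x y : L7, nabla x y =
      ![lam * (y 1 * x 6 + x 1 * y 6) / 2, -(lam * (y 0 * x 6 + x 0 * y 6)) / 2,
        -(lam * (y 3 * x 6 + x 3 * y 6)) / 2, lam * (y 2 * x 6 + x 2 * y 6) / 2, 0, 0,
        lam * (x 0 * y 1 - x 1 * y 0 + x 2 * y 3 - x 3 * y 2) / 2] := by
    intro x y
    funext i
    have h := hK x y (e7 i)
    fin_cases i <;>
      simp [gL, e7, brL, Pi.single_apply, cv0_s17, cv1_s17, cv2_s17, cv3_s17, cv4_s17, cv5_s17, cv6_s17] at h ⊢ <;>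
        linarith
  have hT1' : ∀ x y z : L7, T1 x y z =
      -lam * ((x 0 * y 1 - x 1 * y 0 + x 2 * y 3 - x 3 * y 2) * z 6
        + (y 0 * z 1 - y 1 * z 0 + y 2 * z 3 - y 3 * z 2) * x 6
        + (z 0 * x 1 - z 1 * x 0 + z 2 * x 3 - z 3 * x 2) * y 6) := by
    intro x y z
    rw [hT1]
    simp only [hF1, hnab]
    simp only [gL, ph1, e7, Pi.single_apply, Pi.sub_apply, cv0_s17, cv1_s17, cv2_s17, cv3_s17, cv4_s17, cv5_s17, cv6_s17]
    simp only [Fin.reduceEq, reduceIte]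
    ring
  have hT3' : ∀ x y z : L7, T3 x y z =
      -lam * ((x 0 * y 1 - x 1 * y 0 + x 2 * y 3 - x 3 * y 2) * z 6
        + (y 0 * z 1 - y 1 * z 0 + y 2 * z 3 - y 3 * z 2) * x 6
        + (z 0 * x 1 - z 1 * x 0 + z 2 * x 3 - z 3 * x 2) * y 6) := by
    intro x y z
    rw [hT3]
    simp only [hF3, hnab]
    simp only [gL, ph3, e7, Pi.single_apply, Pi.sub_apply, cv0_s17, cv1_s17, cv2_s17, cv3_s17, cv4_s17, cv5_s17, cv6_s17]
    simp only [Fin.reduceEq, reduceIte]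
    ring
  refine ⟨?_, ?_, ?_, ?_⟩
  · funext x y z
    rw [hT1', hT3']
  · rw [hT1']; simp [e7, Pi.single_apply]
  · rw [hT1']; simp [e7, Pi.single_apply]
  · intro i j k h
    rw [hT1'] at h
    rw [mul_ne_zero_iff] at h
    replace h := h.2
    rw [← ccast] at h
    exact ccdec i j k (by exact_mod_cast h)
end
end

section
/- For the 7-dimensional Lie algebra 𝔩 with bracket [e₁,e₂] = [e₃,e₄] = λe₇, the form g, the Koszul connection ∇ and the almost contact HN-metric 3-structure (φ_α, ξ_α, η_α) with fundamental tensors F_α, define T₂(x,y,z) := −(1/2)Σ_{cyc(x,y,z)}[F₂(x,y,φ₂z) − 3η₂(x)F₂(y,φ₂z,ξ₂)] (cyclic sum over (x,y,z)) and T₁(x,y,z) := F₁(x,y,φ₁z) − F₁(y,x,φ₁z) − F₁(φ₁z,x,y) + 2F₁(x,φ₁y,ξ₁)η₁(z). Then T₂(e₁,e₂,e₇) = T₂(e₃,e₄,e₇) = −λ/2 and T₂(e₁,e₄,e₅) = T₂(e₂,e₃,e₅) = λ/2; in particular T₂ ≠ T₁ (for instance T₁(e₁,e₂,e₇) = −λ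 ≠ −λ/2 = T₂(e₁,e₂,e₇)), so the natural connections with totally skew-symmetric torsion of the three structures do not all coincide. -/
noncomputable section

/-- the torsion T₂ of the natural connection for (φ₂,ξ₂,η₂,g) has
T₂(e₁,e₂,e₇) = T₂(e₃,e₄,e₇) = −λ/2 and T₂(e₁,e₄,e₅) = T₂(e₂,e₃,e₅) = λ/2; in particular
T₂ ≠ T₁ (since T₁(e₁,e₂,e₇) = −λ), so the three natural connections do not all coincide.
Here ξ₁ = e₅ = `e7 4`, η₁(x) = x 4, ξ₂ = e₆ = `e7 5`, η₂(x) = x 5. -/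
theorem stmt_18 (lam : ℝ) (hlam : lam ≠ 0)
    (nabla : L7 → L7 → L7)
    (hK : ∀ x y z : L7, gL (nabla x y) z =
      (1/2) * (gL (brL lam x y) z - gL (brL lam y z) x + gL (brL lam z x) y))
    (F1 F2 : L7 → L7 → L7 → ℝ)
    (hF1 : ∀ x y z : L7, F1 x y z = gL (nabla x (ph1 y) - ph1 (nabla x y)) z)
    (hF2 : ∀ x y z : L7, F2 x y z = gL (nabla x (ph2 y) - ph2 (nabla x y)) z)
    (T1 T2 : L7 → L7 → L7 → ℝ)
    (hT1 : ∀ x y z : L7, T1 x y z =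
      F1 x y (ph1 z) - F1 y x (ph1 z) - F1 (ph1 z) x y + 2 * F1 x (ph1 y) (e7 4) * z 4)
    (hT2 : ∀ x y z : L7, T2 x y z = -(1/2) *
      ((F2 x y (ph2 z) - 3 * x 5 * F2 y (ph2 z) (e7 5))
        + (F2 y z (ph2 x) - 3 * y 5 * F2 z (ph2 x) (e7 5))
        + (F2 z x (ph2 y) - 3 * z 5 * F2 x (ph2 y) (e7 5)))) :
    T2 (e7 0) (e7 1) (e7 6) = -(lam/2) ∧
    T2 (e7 2) (e7 3) (e7 6) = -(lam/2) ∧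
    T2 (e7 0) (e7 3) (e7 4) = lam/2 ∧
    T2 (e7 1) (e7 2) (e7 4) = lam/2 ∧
    T1 (e7 0) (e7 1) (e7 6) = -lam ∧
    T1 (e7 0) (e7 1) (e7 6) ≠ T2 (e7 0) (e7 1) (e7 6) ∧
    T1 ≠ T2 := by
  have M0 : ∀ (a b c d e f g : ℝ), (![a,b,c,d,e,f,g] : Fin 7 → ℝ) 0 = a := fun _ _ _ _ _ _ _ => rfl
  have M1 : ∀ (a b c d e f g : ℝ), (![a,b,c,d,e,f,g] : Fin 7 → ℝ) 1 = b := fun _ _ _ _ _ _ _ => rfl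
  have M2 : ∀ (a b c d e f g : ℝ), (![a,b,c,d,e,f,g] : Fin 7 → ℝ) 2 = c := fun _ _ _ _ _ _ _ => rfl
  have M3 : ∀ (a b c d e f g : ℝ), (![a,b,c,d,e,f,g] : Fin 7 → ℝ) 3 = d := fun _ _ _ _ _ _ _ => rfl
  have M4 : ∀ (a b c d e f g : ℝ), (![a,b,c,d,e,f,g] : Fin 7 → ℝ) 4 = e := fun _ _ _ _ _ _ _ => rfl
  have M5 : ∀ (a b c d e f g : ℝ), (![a,b,c,d,e,f,g] : Fin 7 → ℝ) 5 = f := fun _ _ _ _ _ _ _ => rfl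
  have M6 : ∀ (a b c d e f g : ℝ), (![a,b,c,d,e,f,g] : Fin 7 → ℝ) 6 = g := fun _ _ _ _ _ _ _ => rfl
  have glin : ∀ a b z : L7, gL (a - b) z = gL a z - gL b z := by
    intro a b z; simp only [gL, Pi.sub_apply]; ring
  have gph1 : ∀ v z : L7, gL (ph1 v) z = - gL v (ph1 z) := by
    intro v z; simp only [gL, ph1, M0, M1, M2, M3, M4, M5, M6]; ring
  have gph2 : ∀ v z : L7, gL (ph2 v) z = gL v (ph2 z) := by
    intro v z; simp only [gL, ph2, M0, M1, M2, M3, M4, M5, M6]; ring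
  have gbr : ∀ a b w : L7, gL (brL lam a b) w =
      lam * (a 0 * b 1 - a 1 * b 0 + a 2 * b 3 - a 3 * b 2) * w 6 := by
    intro a b w
    simp [gL, brL, Pi.single_apply]
  have hF1' : ∀ x y z : L7, F1 x y z =
      (1/2) * (gL (brL lam x (ph1 y)) z - gL (brL lam (ph1 y) z) x + gL (brL lam z x) (ph1 y))
      + (1/2) * (gL (brL lam x y) (ph1 z) - gL (brL lam y (ph1 z)) x + gL (brL lam (ph1 z) x) y) := by
    intro x y z
    rw [hF1, glin, gph1, hK, hK]; try ring
  have hF2' : ∀ x y z : L7, F2 x y z =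
      (1/2) * (gL (brL lam x (ph2 y)) z - gL (brL lam (ph2 y) z) x + gL (brL lam z x) (ph2 y))
      - (1/2) * (gL (brL lam x y) (ph2 z) - gL (brL lam y (ph2 z)) x + gL (brL lam (ph2 z) x) y) := by
    intro x y z
    rw [hF2, glin, gph2, hK, hK]; try ring
  have h1 : T2 (e7 0) (e7 1) (e7 6) = -(lam/2) := by
    simp only [hT2, hF2', gbr, ph2, e7, M0, M1, M2, M3, M4, M5, M6, Pi.single_apply]
    simp
    try ring
  have h2 : T2 (e7 2) (e7 3) (e7 6) = -(lam/2) := by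
    simp only [hT2, hF2', gbr, ph2, e7, M0, M1, M2, M3, M4, M5, M6, Pi.single_apply]
    simp
    try ring
  have h3 : T2 (e7 0) (e7 3) (e7 4) = lam/2 := by
    simp only [hT2, hF2', gbr, ph2, e7, M0, M1, M2, M3, M4, M5, M6, Pi.single_apply]
    simp
    try ring
  have h4 : T2 (e7 1) (e7 2) (e7 4) = lam/2 := by
    simp only [hT2, hF2', gbr, ph2, e7, M0, M1, M2, M3, M4, M5, M6, Pi.single_apply]
    simp
    try ring
  have h5 : T1 (e7 0) (e7 1) (e7 6) = -lam := by
    simp only [hT1, hF1', gbr, ph1, e7, M0, M1, M2, M3, M4, M5, M6, Pi.single_apply]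
    simp
    try ring
  have h6 : T1 (e7 0) (e7 1) (e7 6) ≠ T2 (e7 0) (e7 1) (e7 6) := by
    rw [h1, h5]; intro h; apply hlam; linarith
  exact ⟨h1, h2, h3, h4, h5, h6, fun h => h6 (by rw [h])⟩
end
end
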